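/- Let H be a Hopf algebra over a field k. Define A' : H → H ⊗ H by A'(h) = Σ h₍₁₎ ⊗ S(h₍₂₎) − ε(h) 1 ⊗ 1. Then A' is a gauge field (A'(h) ∈ ker(m) for all h, and A'(1) = 0) and it has zero curvature: for all h ∈ H, d(A'(h)) + Σ A'(h₍₁₎) ∧ A'(h₍₂₎) = 0 in H ⊗ H ⊗ H. -/

import Mathlib

/-!
Write `A' = L - η` with `L h = Σ h₍₁₎ ⊗ S(h₍₂₎)` and `η h = ε(h) 1 ⊗ 1`. The antipode axiom gives
`m (L h) = ε(h) 1`, so `A'` takes values in `ker m`, and `Δ 1 = 1 ⊗ 1`, `S 1 = 1` give `A' 1 = 0`.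
For the curvature, the counit axiom turns the wedge terms containing `η` into `L h ∧ (1 ⊗ 1)`,
`(1 ⊗ 1) ∧ L h` and `ε(h) 1 ⊗ 1 ⊗ 1`, while coassociativity and the antipode axiom collapse
`L ∧ L` to `Σ h₍₁₎ ⊗ S(h₍₂₎)h₍₃₎ ⊗ S(h₍₄₎) = Σ h₍₁₎ ⊗ 1 ⊗ S(h₍₂₎)`. These are the three terms of
`d(L h)` and the term `d(η h)`, with opposite signs.
-/

open TensorProduct

noncomputable section

variable {k H : Type*} [Field k] [Ring H] [HopfAlgebra k H]

/-- The exterior differential on universal 1-forms: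
`d(a ⊗ b) = 1 ⊗ a ⊗ b − a ⊗ 1 ⊗ b + a ⊗ b ⊗ 1`. -/
noncomputable def dOne : H ⊗[k] H →ₗ[k] H ⊗[k] (H ⊗[k] H) :=
  TensorProduct.mk k H (H ⊗[k] H) 1
    - LinearMap.lTensor H (TensorProduct.mk k H H 1)
    + LinearMap.lTensor H ((TensorProduct.mk k H H).flip 1)

/-- The wedge product of universal 1-forms: `(a ⊗ b) ∧ (c ⊗ d) = a ⊗ bc ⊗ d`. -/
noncomputable def wedge :
    (H ⊗[k] H) ⊗[k] (H ⊗[k] H) →ₗ[k] H ⊗[k] (H ⊗[k] H) :=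
  LinearMap.lTensor H
      ((LinearMap.mul' k H).rTensor H ∘ₗ (TensorProduct.assoc k H H H).symm.toLinearMap)
    ∘ₗ (TensorProduct.assoc k H H (H ⊗[k] H)).toLinearMap

/-- The gauge field `A'(h) = Σ h₍₁₎ ⊗ S(h₍₂₎) − ε(h) 1 ⊗ 1`. -/
noncomputable def gaugeA' : H →ₗ[k] H ⊗[k] H :=
  (HopfAlgebra.antipode (R := k) (A := H)).lTensor H ∘ₗ Coalgebra.comul
    - (Coalgebra.counit (R := k) (A := H)).smulRight ((1 : H) ⊗ₜ[k] (1 : H))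

open Coalgebra HopfAlgebra LinearMap

namespace TensorProduct

variable {R M N P Q : Type*} [CommRing R] [AddCommGroup M] [Module R M] [AddCommGroup N]
  [Module R N] [AddCommGroup P] [Module R P] [AddCommGroup Q] [Module R Q]

theorem map_sub_left (f₁ f₂ : M →ₗ[R] P) (g : N →ₗ[R] Q) :
    map (f₁ - f₂) g = map f₁ g - map f₂ g :=
  TensorProduct.ext' fun _ _ => by simp [sub_tmul]

theorem map_sub_right (f : M →ₗ[R] P) (g₁ g₂ : N →ₗ[R] Q) :
    map f (g₁ - g₂) = map f g₁ - map f g₂ :=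
  TensorProduct.ext' fun _ _ => by simp [tmul_sub]

end TensorProduct

namespace Coalgebra

variable {R C M N : Type*} [CommSemiring R] [AddCommMonoid C] [Module R C] [Coalgebra R C]
  [AddCommMonoid M] [Module R M] [AddCommMonoid N] [Module R N]

theorem map_counit_smulRight_comul (f : C →ₗ[R] M) (n : N) (c : C) :
    map f (counit.smulRight n) (comul c) = f c ⊗ₜ n := by
  have : (counit.smulRight n : C →ₗ[R] N) = toSpanSingleton R N n ∘ₗ counit := by
    ext; simp
  rw [this, ← rTensor_comp_lTensor, comp_apply, lTensor_comp, comp_apply,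
    lTensor_counit_comul]
  simp

theorem map_smulRight_counit_comul (m : M) (g : C →ₗ[R] N) (c : C) :
    map (counit.smulRight m) g (comul c) = m ⊗ₜ g c := by
  have : (counit.smulRight m : C →ₗ[R] M) = toSpanSingleton R M m ∘ₗ counit := by
    ext; simp
  rw [this, ← lTensor_comp_rTensor, comp_apply, rTensor_comp, comp_apply,
    rTensor_counit_comul]
  simp

end Coalgebra

namespace HopfAlgebra

variable (R : Type*) {A : Type*} [CommSemiring R] [Semiring A] [HopfAlgebra R A]

/-- `a ⊗ c ↦ Σ a₍₁₎ ⊗ S(a₍₂₎) c`. -/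
def comulAntipodeMul : A ⊗[R] A →ₗ[R] A ⊗[R] A :=
  lTensor A (mul' R A ∘ₗ (antipode R).rTensor A) ∘ₗ (TensorProduct.assoc R A A A).toLinearMap
    ∘ₗ comul.rTensor A

theorem comulAntipodeMul_comul (a : A) : comulAntipodeMul R (comul a) = a ⊗ₜ 1 := by
  rw [comulAntipodeMul, comp_apply, comp_apply, LinearEquiv.coe_coe, coassoc_apply,
    ← comp_apply (lTensor A _), ← lTensor_comp, comp_assoc, mul_antipode_rTensor_comul,
    lTensor_comp, comp_apply, lTensor_counit_comul]
  simp

def lTensorAntipodeComul : A →ₗ[R] A ⊗[R] A := (antipode R).lTensor A ∘ₗ comul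

end HopfAlgebra

section UniversalCalculus

@[simp]
theorem wedge_tmul (a b c d : H) :
    wedge (k := k) ((a ⊗ₜ b) ⊗ₜ (c ⊗ₜ d)) = a ⊗ₜ ((b * c) ⊗ₜ d) := by
  simp [wedge]

theorem wedge_tmul_one_tmul_one (z : H ⊗[k] H) :
    wedge (z ⊗ₜ ((1 : H) ⊗ₜ (1 : H))) = ((TensorProduct.mk k H H).flip 1).lTensor H z := by
  induction z using TensorProduct.induction_on with
  | zero => simp
  | tmul a b => simp
  | add x y hx hy => simp only [add_tmul, map_add, hx, hy]

theorem wedge_one_tmul_one_tmul (z : H ⊗[k] H) :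
    wedge (((1 : H) ⊗ₜ (1 : H)) ⊗ₜ z) = (1 : H) ⊗ₜ[k] z := by
  induction z using TensorProduct.induction_on with
  | zero => simp
  | tmul a b => simp
  | add x y hx hy => simp only [tmul_add, map_add, hx, hy]

theorem wedge_lTensorAntipodeComul_tmul (a c d : H) :
    wedge (lTensorAntipodeComul k a ⊗ₜ (c ⊗ₜ d))
      = TensorProduct.assoc k H H H (comulAntipodeMul k (a ⊗ₜ c) ⊗ₜ d) := by
  simp only [lTensorAntipodeComul, comulAntipodeMul, comp_apply, rTensor_tmul,
    LinearEquiv.coe_coe]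
  induction comul (R := k) a using TensorProduct.induction_on with
  | zero => simp
  | tmul x y => simp
  | add x y hx hy => simp only [map_add, add_tmul, hx, hy]

theorem wedge_comp_map_lTensorAntipodeComul :
    wedge ∘ₗ map (lTensorAntipodeComul k) ((antipode k).lTensor H)
        ∘ₗ (TensorProduct.assoc k H H H).toLinearMap
      = (TensorProduct.assoc k H H H).toLinearMap ∘ₗ map (comulAntipodeMul k) (antipode k) := by
  apply TensorProduct.ext_threefold
  intro a c d
  simpa using wedge_lTensorAntipodeComul_tmul a c (antipode k d)

/-- `Σ h₍₁₎ ⊗ S(h₍₂₎)h₍₃₎ ⊗ S(h₍₄₎) = Σ h₍₁₎ ⊗ 1 ⊗ S(h₍₂₎)`. -/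
theorem wedge_map_lTensorAntipodeComul_comul (h : H) :
    wedge (map (lTensorAntipodeComul k) (lTensorAntipodeComul k) (comul h))
      = (TensorProduct.mk k H H 1).lTensor H (lTensorAntipodeComul k h) := by
  have hT : comulAntipodeMul k ∘ₗ comul = (TensorProduct.mk k H H).flip 1 :=
    LinearMap.ext (comulAntipodeMul_comul k)
  calc wedge (map (lTensorAntipodeComul k) (lTensorAntipodeComul k) (comul h))
      = wedge (map (lTensorAntipodeComul k) ((antipode k).lTensor H)
          (TensorProduct.assoc k H H H (comul.rTensor H (comul h)))) := by
        rw [coassoc_apply, map_lTensor]; rfl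
    _ = TensorProduct.assoc k H H H (map (comulAntipodeMul k) (antipode k)
          (comul.rTensor H (comul h))) :=
        LinearMap.congr_fun wedge_comp_map_lTensorAntipodeComul _
    _ = _ := by
        rw [map_rTensor, hT, lTensorAntipodeComul, comp_apply]
        induction comul (R := k) h using TensorProduct.induction_on with
        | zero => simp
        | tmul x y => simp
        | add x y hx hy => simp only [map_add, hx, hy]

theorem dOne_smul_tmul_one_one (c : k) :
    dOne (c • ((1 : H) ⊗ₜ[k] (1 : H))) = (1 : H) ⊗ₜ (c • ((1 : H) ⊗ₜ[k] (1 : H))) := by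
  simp [dOne, tmul_smul]

end UniversalCalculus

/-- `A'(h) = Σ h₍₁₎ ⊗ S(h₍₂₎) − ε(h) 1 ⊗ 1` is a gauge field (`A'(h) ∈ ker m`,
`A'(1) = 0`) with zero curvature: `d(A'(h)) + Σ A'(h₍₁₎) ∧ A'(h₍₂₎) = 0` for all `h`. -/
theorem statement6 :
    (∀ h : H, LinearMap.mul' k H (gaugeA' (k := k) (H := H) h) = 0)
    ∧ gaugeA' (k := k) (H := H) 1 = 0
    ∧ (∀ h : H,
        dOne (gaugeA' (k := k) (H := H) h)
          + wedge ((TensorProduct.map gaugeA' gaugeA') (Coalgebra.comul (R := k) h)) = 0) := by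
  refine ⟨fun h => ?_, ?_, fun h => ?_⟩
  · simp [gaugeA', Algebra.algebraMap_eq_smul_one]
  · simp [gaugeA', Algebra.TensorProduct.one_def]
  · have hA : gaugeA' = lTensorAntipodeComul k - counit.smulRight ((1 : H) ⊗ₜ[k] (1 : H)) := rfl
    simp only [hA, map_sub_left, map_sub_right, LinearMap.sub_apply, map_sub,
      wedge_map_lTensorAntipodeComul_comul, map_counit_smulRight_comul,
      map_smulRight_counit_comul, wedge_tmul_one_tmul_one, wedge_one_tmul_one_tmul,
      smulRight_apply, dOne_smul_tmul_one_one]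
    simp only [dOne, LinearMap.add_apply, LinearMap.sub_apply, mk_apply, map_smul, lTensor_tmul,
      flip_apply, tmul_smul]
    abel
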